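/- (Optimality of the compilation, extended form.) Let π* be a plan solving the compiled problem P_mod of minimum length among all plans solving P_mod. Then for every plan π solving the robot's problem P_R, IE(π*) ≤ IE(π), where IE is the inexplicability score valued in [0, ∞]; that is, π* attains the minimum inexplicability score among all plans solving P_R. -/
import Mathlib


/-- A STRIPS planning problem over fluents `F` and actions `A`. -/
structure Problem (F : Type) (A : Type) where
  pre : A → Set F
  add : A → Set F
  del : A → Set F
  I : Set F
  G : Set F

/-- Applying action `a` in state `s`. -/
def applyAct {F A : Type} (P : Problem F A) (s : Set F) (a : A) : Set F :=
  (s ∪ P.add a) \ P.del a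

/-- A plan is executable from a state iff each action's precondition holds
in the state obtained by applying the preceding actions. -/
def Executable {F A : Type} (P : Problem F A) : Set F → List A → Prop
  | _, [] => True
  | s, a :: rest => P.pre a ⊆ s ∧ Executable P (applyAct P s a) rest

/-- The resulting state of a plan from a state. -/
def result {F A : Type} (P : Problem F A) : Set F → List A → Set F
  | s, [] => s
  | s, a :: rest => result P (applyAct P s a) rest

/-- A plan solves a problem iff it is executable from the initial state and
its resulting state contains the goal. -/
def Solves {F A : Type} (P : Problem F A) (π : List A) : Prop :=
  Executable P P.I π ∧ P.G ⊆ result P P.I π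

/-- Tagged union of two states: `s_R ⊎ s_H ⊆ F ⊕ F`. -/
def tagUnion {F : Type} (sR sH : Set F) : Set (F ⊕ F) :=
  Sum.inl '' sR ∪ Sum.inr '' sH

/-- The compiled problem `P_mod` over `F ⊕ F`. -/
def compiled {F A : Type} (PR PH : Problem F A) : Problem (F ⊕ F) A where
  pre a := tagUnion (PR.pre a) (PH.pre a)
  add a := tagUnion (PR.add a) (PH.add a)
  del a := tagUnion (PR.del a) (PH.del a)
  I := tagUnion PR.I PH.I
  G := tagUnion PR.G PH.G

-- Inexplicability score (unit action costs): `exp (|len π - c_H*|)` if `π`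
-- also solves `P_H`, and `∞` otherwise; valued in `[0, ∞]`.
open Classical in
noncomputable def IE {F A : Type} (PH : Problem F A) (cH : ℕ) (π : List A) : ENNReal :=
  if Solves PH π then ENNReal.ofReal (Real.exp |(π.length : ℝ) - (cH : ℝ)|) else ⊤


lemma tagUnion_subset {F : Type} {a b c d : Set F} :
    tagUnion a b ⊆ tagUnion c d ↔ a ⊆ c ∧ b ⊆ d := by
  constructor
  · intro h
    constructor
    · intro x hx
      have := h (Set.mem_union_left _ ⟨x, hx, rfl⟩)
      rcases this with ⟨y, hy, he⟩ | ⟨y, hy, he⟩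
      · cases he; exact hy
      · cases he
    · intro x hx
      have := h (Set.mem_union_right _ ⟨x, hx, rfl⟩)
      rcases this with ⟨y, hy, he⟩ | ⟨y, hy, he⟩
      · cases he
      · cases he; exact hy
  · rintro ⟨h1, h2⟩ x hx
    rcases hx with ⟨y, hy, he⟩ | ⟨y, hy, he⟩
    · exact Set.mem_union_left _ ⟨y, h1 hy, he⟩
    · exact Set.mem_union_right _ ⟨y, h2 hy, he⟩

lemma applyAct_compiled {F A : Type} (PR PH : Problem F A) (sR sH : Set F) (a : A) :
    applyAct (compiled PR PH) (tagUnion sR sH) a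
      = tagUnion (applyAct PR sR a) (applyAct PH sH a) := by
  ext x
  cases x <;>
    simp [applyAct, tagUnion, compiled, Set.mem_union, Set.mem_diff, Set.mem_image] <;> tauto

lemma exec_compiled {F A : Type} (PR PH : Problem F A) :
    ∀ (π : List A) (sR sH : Set F),
    Executable (compiled PR PH) (tagUnion sR sH) π ↔
      Executable PR sR π ∧ Executable PH sH π := by
  intro π
  induction π with
  | nil => intro sR sH; simp [Executable]
  | cons a rest ih =>
    intro sR sH
    simp only [Executable]
    rw [show (compiled PR PH).pre a = tagUnion (PR.pre a) (PH.pre a) from rfl,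
      tagUnion_subset, applyAct_compiled, ih]
    tauto

lemma result_compiled {F A : Type} (PR PH : Problem F A) :
    ∀ (π : List A) (sR sH : Set F),
    result (compiled PR PH) (tagUnion sR sH) π
      = tagUnion (result PR sR π) (result PH sH π) := by
  intro π
  induction π with
  | nil => intro sR sH; rfl
  | cons a rest ih =>
    intro sR sH
    simp only [result, applyAct_compiled, ih]

lemma solves_compiled {F A : Type} (PR PH : Problem F A) (π : List A) :
    Solves (compiled PR PH) π ↔ Solves PR π ∧ Solves PH π := by
  unfold Solves
  rw [show (compiled PR PH).I = tagUnion PR.I PH.I from rfl,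
    show (compiled PR PH).G = tagUnion PR.G PH.G from rfl,
    exec_compiled, result_compiled, tagUnion_subset]
  tauto

theorem stmt_7 {F A : Type} (PR PH : Problem F A) (cH : ℕ)
    (hcH_att : ∃ π : List A, Solves PH π ∧ π.length = cH)
    (hcH_min : ∀ π : List A, Solves PH π → cH ≤ π.length)
    (πs : List A) (hπs : Solves (compiled PR PH) πs)
    (hπs_min : ∀ π : List A, Solves (compiled PR PH) π → πs.length ≤ π.length)
    (π : List A) (hR : Solves PR π) :
    IE PH cH πs ≤ IE PH cH π := by
  have hs := (solves_compiled PR PH πs).mp hπs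
  have hsH : Solves PH πs := hs.2
  by_cases hH : Solves PH π
  · have hcomp : Solves (compiled PR PH) π := (solves_compiled PR PH π).mpr ⟨hR, hH⟩
    have hlen : πs.length ≤ π.length := hπs_min π hcomp
    have h1 : cH ≤ πs.length := hcH_min πs hsH
    have h2 : cH ≤ π.length := hcH_min π hH
    simp only [IE, if_pos hsH, if_pos hH]
    apply ENNReal.ofReal_le_ofReal
    apply Real.exp_le_exp.mpr
    rw [abs_of_nonneg (sub_nonneg.mpr ((Nat.cast_le (α:=ℝ)).mpr h1)),
      abs_of_nonneg (sub_nonneg.mpr ((Nat.cast_le (α:=ℝ)).mpr h2))]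
    have : (πs.length : ℝ) ≤ π.length := Nat.cast_le.mpr hlen
    linarith
  · simp only [IE, if_neg hH]
    exact le_top
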